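/- Let T > 0 and let x and x_n (n ∈ ℕ) be càdlàg functions on [0,T] with d_{M₁}(x_n, x) → 0 as n → ∞. If in addition each x_n is continuous on [0,T], then limsup_{n→∞} sup_{t∈[0,T]} |x_n(t) − x(t)| ≤ J_max(x). (Lemma 4.2(c).) -/

import Mathlib

open Set Filter MeasureTheory Topology

/-- The left limit of `x` at `t`, with the convention `x(0−) = x(0)`. -/
noncomputable def leftL (x : ℝ → ℝ) (t : ℝ) : ℝ :=
  if t = 0 then x 0 else Function.leftLim x t

/-- `x` is càdlàg on `[0, T]`: right-continuous on `[0, T)` and with left limits on `(0, T]`. -/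
def IsCadlagOn (T : ℝ) (x : ℝ → ℝ) : Prop :=
  (∀ t ∈ Set.Ico (0:ℝ) T, Filter.Tendsto x (nhdsWithin t (Set.Ici t)) (nhds (x t))) ∧
  (∀ t ∈ Set.Ioc (0:ℝ) T, ∃ L : ℝ, Filter.Tendsto x (nhdsWithin t (Set.Iio t)) (nhds L))

/-- `(u, r)` is a parametric representation of the càdlàg function `x` on `[0, T]`. -/
def IsParamRep (T : ℝ) (x u r : ℝ → ℝ) : Prop :=
  ContinuousOn u (Set.Icc 0 1) ∧ ContinuousOn r (Set.Icc 0 1) ∧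
  MonotoneOn r (Set.Icc 0 1) ∧ r 0 = 0 ∧ r 1 = T ∧
  (∀ s ∈ Set.Icc (0:ℝ) 1, u s ∈ segment ℝ (leftL x (r s)) (x (r s))) ∧
  (∀ t ∈ Set.Icc (0:ℝ) T, ∀ v ∈ segment ℝ (leftL x t) (x t),
    ∃ s ∈ Set.Icc (0:ℝ) 1, r s = t ∧ u s = v) ∧
  (∀ s₁ ∈ Set.Icc (0:ℝ) 1, ∀ s₂ ∈ Set.Icc (0:ℝ) 1, s₁ ≤ s₂ → r s₁ = r s₂ →
    0 ≤ (u s₂ - u s₁) * (x (r s₁) - leftL x (r s₁)))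

/-- Uniform norm over `[0, 1]`. -/
noncomputable def unif (f : ℝ → ℝ) : ℝ := ⨆ s : Set.Icc (0:ℝ) 1, |f s.1|

/-- Uniform norm over `[0, T]`. -/
noncomputable def supT (T : ℝ) (f : ℝ → ℝ) : ℝ := ⨆ t : Set.Icc (0:ℝ) T, |f t.1|

/-- The maximum-jump functional `J_max(x)` over `[0, T]`. -/
noncomputable def Jmax (T : ℝ) (x : ℝ → ℝ) : ℝ :=
  ⨆ t : Set.Icc (0:ℝ) T, |x t.1 - leftL x t.1|

/-- The Skorohod `M₁` metric on `D([0, T], ℝ)`. -/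
noncomputable def dM1 (T : ℝ) (x y : ℝ → ℝ) : ℝ :=
  sInf {d : ℝ | ∃ ux rx uy ry : ℝ → ℝ, IsParamRep T x ux rx ∧ IsParamRep T y uy ry ∧
    d = max (unif fun s => ux s - uy s) (unif fun s => rx s - ry s)}

/-- The `L₁` norm over `[0, 1]`. -/
noncomputable def L1norm (g : ℝ → ℝ) : ℝ := ∫ s in (0:ℝ)..1, |g s|

/-- `r` is absolutely continuous on `[0,1]` with (integrable) derivative `r'`. -/
def AbsContOn01 (r r' : ℝ → ℝ) : Prop :=
  IntervalIntegrable r' MeasureTheory.volume 0 1 ∧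
  ∀ s ∈ Set.Icc (0:ℝ) 1, r s = r 0 + ∫ w in (0:ℝ)..s, r' w

/-- `y` is bounded and Borel measurable on `[0, T]`. -/
def BddMeasOn (T : ℝ) (y : ℝ → ℝ) : Prop :=
  (∃ M : ℝ, ∀ t ∈ Set.Icc (0:ℝ) T, |y t| ≤ M) ∧
  Measurable fun t : Set.Icc (0:ℝ) T => y t.1

/-- The `M₁` oscillation function `w_s(x, δ)` on `[0, T]`. -/
noncomputable def wOsc (T : ℝ) (x : ℝ → ℝ) (δ : ℝ) : ℝ :=
  sSup {v : ℝ | ∃ t ∈ Set.Icc (0:ℝ) T, ∃ t₁ t₂ t₃ : ℝ,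
    max 0 (t - δ) ≤ t₁ ∧ t₁ < t₂ ∧ t₂ < t₃ ∧ t₃ ≤ min (t + δ) T ∧
    v = Metric.infDist (x t₂) (segment ℝ (x t₁) (x t₃))}

/-- The ordinary oscillation modulus `ν(x, δ)` on `[0, T]`. -/
noncomputable def nuOsc (T : ℝ) (x : ℝ → ℝ) (δ : ℝ) : ℝ :=
  sSup {v : ℝ | ∃ t ∈ Set.Icc (0:ℝ) (T - δ), ∃ t₁ ∈ Set.Icc t (t + δ),
    ∃ t₂ ∈ Set.Icc t (t + δ), v = |x t₁ - x t₂|}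

/-!
The infimum defining `dM1 T (x n) x₀` runs over a nonempty set because every càdlàg function has
a parametric representation: the jump times of `x₀` are countable, so there is a strictly
increasing right-continuous time scale `G` with `G 0 = 0`, `G T = 1` that jumps wherever `x₀`
does; take for `r` the generalized inverse of `G`, and let `u` run affinely along the segment
`[x₀(t−), x₀(t)]` while `r` rests at `t`.

A continuous `x n` is represented by its own graph, so `dM1 T (x n) x₀ < ε` puts each value
`x n t` within `ε` of a point of a segment `[x₀(τ−), x₀(τ)]` with `|τ - t| < ε`. By compactness,
on short enough intervals a càdlàg function (and its left limits) oscillates by at most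
`Jmax T x₀ + η`, and segments are convex, so `|x n t - x₀ t| ≤ ε + Jmax T x₀ + η`.
-/

lemma tendsto_of_mem_segment {ι : Type*} {l : Filter ι} {a b v : ι → ℝ} {L : ℝ}
    (ha : Tendsto a l (𝓝 L)) (hb : Tendsto b l (𝓝 L))
    (hv : ∀ᶠ i in l, v i ∈ segment ℝ (a i) (b i)) : Tendsto v l (𝓝 L) := by
  simp only [segment_eq_uIcc, uIcc, mem_Icc] at hv
  exact tendsto_of_tendsto_of_tendsto_of_le_of_le' (by simpa using ha.min hb)
    (by simpa using ha.max hb) (hv.mono fun _ h => h.1) (hv.mono fun _ h => h.2)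

lemma leftL_zero (x : ℝ → ℝ) : leftL x 0 = x 0 := if_pos rfl

lemma leftL_of_ne_zero {x : ℝ → ℝ} {t : ℝ} (ht : t ≠ 0) : leftL x t = Function.leftLim x t :=
  if_neg ht

lemma leftL_eq_of_continuousOn {T : ℝ} {x : ℝ → ℝ} (hx : ContinuousOn x (Icc 0 T)) {t : ℝ}
    (ht : t ∈ Icc 0 T) : leftL x t = x t := by
  rcases ht.1.eq_or_lt with rfl | ht0
  · exact leftL_zero x
  rw [leftL_of_ne_zero ht0.ne']
  refine leftLim_eq_of_tendsto ((hx t ht).tendsto.mono_left ?_)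
  exact nhdsWithin_le_of_mem
    (mem_of_superset (Ioo_mem_nhdsLT ht0) fun w hw => ⟨hw.1.le, hw.2.le.trans ht.2⟩)

lemma Jmax_nonneg (T : ℝ) (x : ℝ → ℝ) : 0 ≤ Jmax T x :=
  Real.iSup_nonneg fun _ => abs_nonneg _

namespace IsCadlagOn

variable {T : ℝ} {x : ℝ → ℝ}

lemma tendsto_nhdsLT (hx : IsCadlagOn T x) {t : ℝ} (ht : t ∈ Ioc 0 T) :
    Tendsto x (𝓝[<] t) (𝓝 (leftL x t)) := by
  rw [leftL_of_ne_zero ht.1.ne']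
  exact tendsto_leftLim_of_tendsto (hx.2 t ht)

lemma leftL_mem_of_mapsTo (hx : IsCadlagOn T x) {C : Set ℝ} (hC : IsClosed C) {a t : ℝ}
    (ht : t ∈ Ioc 0 T) (hat : a < t) (h : MapsTo x (Ioo a t) C) : leftL x t ∈ C :=
  hC.mem_of_tendsto (hx.tendsto_nhdsLT ht) (mem_of_superset (Ioo_mem_nhdsLT hat) h)

lemma tendsto_leftL_nhdsLT (hx : IsCadlagOn T x) {t : ℝ} (ht : t ∈ Ioc 0 T) :
    Tendsto (leftL x) (𝓝[<] t) (𝓝 (leftL x t)) := by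
  have h := tendsto_leftLim_of_tendsto (hx.2 t ht)
  rw [leftL_of_ne_zero ht.1.ne']
  refine ((continuousWithinAt_leftLim_Iic h).mono Iio_subset_Iic_self).congr' ?_
  filter_upwards [Ioo_mem_nhdsLT ht.1] with τ hτ
  exact (leftL_of_ne_zero hτ.1.ne').symm

lemma tendsto_nhdsWithin_Ioc (hx : IsCadlagOn T x) {t : ℝ} (ht : t ∈ Icc 0 T) :
    Tendsto x (𝓝[Ioc t T] t) (𝓝 (x t)) := by
  rcases ht.2.eq_or_lt with rfl | htT
  · simp
  · exact (hx.1 t ⟨ht.1, htT⟩).mono_left (nhdsWithin_mono _ fun _ h => mem_Ici.2 h.1.le)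

lemma tendsto_leftL_nhdsWithin_Ioc (hx : IsCadlagOn T x) {t : ℝ} (ht : t ∈ Icc 0 T) :
    Tendsto (leftL x) (𝓝[Ioc t T] t) (𝓝 (x t)) := by
  rcases ht.2.eq_or_lt with rfl | htT
  · simp
  refine (closed_nhds_basis (x t)).tendsto_right_iff.2 fun C ⟨hC, hCc⟩ => ?_
  have hev : ∀ᶠ w in 𝓝[>] t, x w ∈ C := by
    rw [← nhdsWithin_Ioc_eq_nhdsGT htT]
    exact hx.tendsto_nhdsWithin_Ioc ht hC
  obtain ⟨c, hc, hsub⟩ := mem_nhdsGT_iff_exists_Ioo_subset.1 hev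
  rw [nhdsWithin_Ioc_eq_nhdsGT htT]
  filter_upwards [Ioo_mem_nhdsGT hc, Ioc_mem_nhdsGT htT] with τ hτ hτT
  exact hx.leftL_mem_of_mapsTo hCc ⟨ht.1.trans_lt hτ.1, hτT.2⟩ hτ.1
    fun w hw => hsub ⟨hw.1, hw.2.trans hτ.2⟩

lemma exists_subseq_tendsto (hx : IsCadlagOn T x) {t : ℝ} (ht : t ∈ Icc 0 T) {z : ℕ → ℝ}
    (hz : ∀ j, z j ∈ Icc 0 T) (hzt : Tendsto z atTop (𝓝 t)) :
    ∃ φ : ℕ → ℕ, StrictMono φ ∧ ∃ a, (a = x t ∨ a = leftL x t) ∧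
      Tendsto (fun j => x (z (φ j))) atTop (𝓝 a) := by
  by_cases hright : ∃ᶠ j in atTop, t < z j
  · obtain ⟨φ, hφ, hφt⟩ := extraction_of_frequently_atTop hright
    refine ⟨φ, hφ, x t, Or.inl rfl, (hx.tendsto_nhdsWithin_Ioc ht).comp ?_⟩
    exact tendsto_nhdsWithin_of_tendsto_nhds_of_eventually_within _
      (hzt.comp hφ.tendsto_atTop) (Eventually.of_forall fun j => ⟨hφt j, (hz _).2⟩)
  by_cases hleft : ∃ᶠ j in atTop, z j < t
  · obtain ⟨φ, hφ, hφt⟩ := extraction_of_frequently_atTop hleft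
    have ht0 : 0 < t := (hz _).1.trans_lt (hφt 0)
    refine ⟨φ, hφ, leftL x t, Or.inr rfl, (hx.tendsto_nhdsLT ⟨ht0, ht.2⟩).comp ?_⟩
    exact tendsto_nhdsWithin_of_tendsto_nhds_of_eventually_within _
      (hzt.comp hφ.tendsto_atTop) (Eventually.of_forall hφt)
  have heq : ∀ᶠ j in atTop, z j = t := by
    filter_upwards [not_frequently.1 hright, not_frequently.1 hleft] with j h₁ h₂
    exact le_antisymm (not_lt.1 h₁) (not_lt.1 h₂)
  refine ⟨id, strictMono_id, x t, Or.inl rfl, tendsto_const_nhds.congr' ?_⟩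
  filter_upwards [heq] with j hj
  simp [hj]

lemma exists_bound (hx : IsCadlagOn T x) : ∃ M, ∀ t ∈ Icc 0 T, |x t| ≤ M := by
  by_contra! h
  choose z hz hzx using fun n : ℕ => h n
  obtain ⟨t, ht, φ, hφ, hzt⟩ := isCompact_Icc.tendsto_subseq hz
  obtain ⟨ψ, hψ, a, -, ha⟩ := hx.exists_subseq_tendsto ht (fun j => hz (φ j)) hzt
  obtain ⟨j, hja, hjn⟩ := ((ha.abs.eventually (gt_mem_nhds (lt_add_one |a|))).and
    (tendsto_natCast_atTop_atTop.eventually_ge_atTop (|a| + 1))).exists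
  have hj : (j : ℝ) ≤ φ (ψ j) := by exact_mod_cast (hφ.comp hψ).id_le j
  linarith [hzx (φ (ψ j))]

lemma abs_leftL_le (hx : IsCadlagOn T x) {M : ℝ} (hM : ∀ t ∈ Icc 0 T, |x t| ≤ M) {t : ℝ}
    (ht : t ∈ Icc 0 T) : |leftL x t| ≤ M := by
  rcases ht.1.eq_or_lt with rfl | ht0
  · exact (leftL_zero x).symm ▸ hM 0 ht
  exact hx.leftL_mem_of_mapsTo (C := {v | |v| ≤ M})
    (isClosed_le continuous_abs continuous_const) ⟨ht0, ht.2⟩ ht0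
    fun w hw => hM w ⟨hw.1.le, hw.2.le.trans ht.2⟩

lemma abs_sub_leftL_le_Jmax (hx : IsCadlagOn T x) {t : ℝ} (ht : t ∈ Icc 0 T) :
    |x t - leftL x t| ≤ Jmax T x := by
  obtain ⟨M, hM⟩ := hx.exists_bound
  refine le_ciSup (f := fun τ : Icc (0 : ℝ) T => |x τ - leftL x τ|) ⟨M + M, ?_⟩ ⟨t, ht⟩
  rintro _ ⟨⟨τ, hτ⟩, rfl⟩
  linarith [abs_sub (x τ) (leftL x τ), hM τ hτ, hx.abs_leftL_le hM hτ]

lemma exists_abs_sub_le_Jmax_add (hx : IsCadlagOn T x) {η : ℝ} (hη : 0 < η) :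
    ∃ δ > 0, ∀ p ∈ Icc 0 T, ∀ q ∈ Icc 0 T, |p - q| < δ → |x p - x q| ≤ Jmax T x + η := by
  by_contra! h
  choose p hp q hq hpq hxpq using fun k : ℕ => h (1 / (k + 1)) Nat.one_div_pos_of_nat
  obtain ⟨t, ht, φ, hφ, hpt⟩ := isCompact_Icc.tendsto_subseq hp
  have hqt : Tendsto (fun k => q (φ k)) atTop (𝓝 t) := by
    have hpq0 : Tendsto (fun k => p (φ k) - q (φ k)) atTop (𝓝 0) :=
      squeeze_zero_norm (fun k => (hpq (φ k)).le)
        (tendsto_one_div_add_atTop_nhds_zero_nat.comp hφ.tendsto_atTop)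
    simpa using hpt.sub hpq0
  obtain ⟨ψ₁, hψ₁, a, ha, hpa⟩ := hx.exists_subseq_tendsto ht (fun k => hp (φ k)) hpt
  obtain ⟨ψ₂, hψ₂, b, hb, hqb⟩ :=
    hx.exists_subseq_tendsto ht (fun k => hq (φ (ψ₁ k))) (hqt.comp hψ₁.tendsto_atTop)
  have hab : Jmax T x + η ≤ |a - b| :=
    ge_of_tendsto ((hpa.comp hψ₂.tendsto_atTop).sub hqb).abs
      (Eventually.of_forall fun k => (hxpq _).le)
  have hjump := hx.abs_sub_leftL_le_Jmax ht
  have hba : |a - b| ≤ Jmax T x := by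
    rcases ha with rfl | rfl <;> rcases hb with rfl | rfl <;>
      simp [abs_sub_comm, hjump, Jmax_nonneg]
  linarith

lemma abs_leftL_sub_le (hx : IsCadlagOn T x) {δ c : ℝ}
    (hδ : ∀ p ∈ Icc 0 T, ∀ q ∈ Icc 0 T, |p - q| < δ → |x p - x q| ≤ c) {τ q : ℝ}
    (hτ : τ ∈ Icc 0 T) (hq : q ∈ Icc 0 T) (hτq : |τ - q| < δ) : |leftL x τ - x q| ≤ c := by
  rcases hτ.1.eq_or_lt with rfl | hτ0
  · exact (leftL_zero x).symm ▸ hδ 0 hτ q hq hτq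
  -- Every `w` with `τ - (δ - |τ - q|) < w < τ` is within `δ` of `q`.
  refine hx.leftL_mem_of_mapsTo (C := {v | |v - x q| ≤ c})
    (isClosed_le (by fun_prop) continuous_const) ⟨hτ0, hτ.2⟩
    (max_lt hτ0 (sub_lt_self τ (sub_pos.2 hτq))) fun w hw => ?_
  have h₁ := (le_max_left _ _).trans_lt hw.1
  have h₂ := (le_max_right _ _).trans_lt hw.1
  refine hδ w ⟨h₁.le, hw.2.le.trans hτ.2⟩ q hq (abs_lt.2 ⟨?_, ?_⟩) <;>
    linarith [le_abs_self (τ - q), neg_abs_le (τ - q), hw.2]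

lemma countable_setOf_lt_abs_jump (hx : IsCadlagOn T x) {ε : ℝ} (hε : 0 < ε) :
    {t ∈ Ioc 0 T | ε < |x t - leftL x t|}.Countable := by
  set E := {t ∈ Ioc 0 T | ε < |x t - leftL x t|}
  refine (countable_setOfPred_isolated_left_within (s := E)).mono fun t ht => ?_
  refine ⟨ht, ?_⟩
  -- Just left of `t`, both `x` and `leftL x` stay within `ε / 2` of `leftL x t`, so no jump
  -- there exceeds `ε`.
  obtain ⟨a, hat, hsub⟩ := mem_nhdsLT_iff_exists_Ioo_subset.1
    (hx.tendsto_nhdsLT ht.1 (Metric.closedBall_mem_nhds (leftL x t) (half_pos hε)))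
  have hempty : E ∩ Iio t ∩ Ioo a t = ∅ := by
    refine eq_empty_of_forall_notMem fun w ⟨⟨hwE, _⟩, hw⟩ => hwE.2.not_ge ?_
    have h₁ : x w ∈ Metric.closedBall (leftL x t) (ε / 2) := hsub hw
    have h₂ : leftL x w ∈ Metric.closedBall (leftL x t) (ε / 2) :=
      hx.leftL_mem_of_mapsTo Metric.isClosed_closedBall hwE.1 hw.1
        fun v hv => hsub ⟨hv.1, hv.2.trans hw.2⟩
    rw [Metric.mem_closedBall, Real.dist_eq] at h₁ h₂
    linarith [abs_sub_le (x w) (leftL x t) (leftL x w), abs_sub_comm (leftL x w) (leftL x t)]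
  rw [← empty_mem_iff_bot, ← hempty]
  exact inter_mem self_mem_nhdsWithin
    (nhdsWithin_mono _ inter_subset_right (Ioo_mem_nhdsLT hat))

lemma countable_jumps (hx : IsCadlagOn T x) : {t ∈ Ioc 0 T | x t ≠ leftL x t}.Countable := by
  refine (countable_iUnion fun n : ℕ => hx.countable_setOf_lt_abs_jump
    (Nat.one_div_pos_of_nat (n := n))).mono fun t ⟨ht, hjump⟩ => ?_
  obtain ⟨n, hn⟩ := exists_nat_one_div_lt (abs_pos.2 (sub_ne_zero.2 hjump))
  exact mem_iUnion.2 ⟨n, ht, hn⟩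

end IsCadlagOn

lemma StrictMono.lt_leftLim {G : ℝ → ℝ} (hG : StrictMono G) {a t : ℝ} (h : a < t) :
    G a < Function.leftLim G t := by
  obtain ⟨m, ham, hmt⟩ := exists_between h
  exact (hG ham).trans_le (hG.monotone.le_leftLim hmt)

structure IsTimeScale (G : ℝ → ℝ) (T : ℝ) : Prop where
  strictMono : StrictMono G
  continuousWithinAt_Ici : ∀ t, ContinuousWithinAt G (Ici t) t
  map_zero : G 0 = 0
  map_T : G T = 1

lemma IsTimeScale.nonneg {G : ℝ → ℝ} {T : ℝ} (hG : IsTimeScale G T) : 0 ≤ T :=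
  hG.strictMono.le_iff_le.1 (by rw [hG.map_zero, hG.map_T]; exact zero_le_one)

open ProbabilityTheory in
lemma exists_stieltjesFunction_leftLim_lt {D : Set ℝ} (hD : D.Countable) :
    ∃ F : StieltjesFunction ℝ, ∀ d ∈ D, Function.leftLim F d < F d := by
  obtain ⟨e, he⟩ := countable_iff_exists_subset_range.1 hD
  let p : unitInterval := ⟨1 / 2, by norm_num, by norm_num⟩
  have hp0 : p ≠ 0 := by simp [p, ← Subtype.coe_ne_coe]
  have hp1 : p ≠ 1 := by simp [p, ← Subtype.coe_ne_coe]
  let μ := (geometricMeasure p).map e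
  have : IsProbabilityMeasure μ := Measure.isProbabilityMeasure_map measurable_from_nat.aemeasurable
  refine ⟨cdf μ, fun d hd => ?_⟩
  obtain ⟨k, rfl⟩ := he hd
  have hatom : μ {e k} ≠ 0 := by
    rw [Measure.map_apply measurable_from_nat (measurableSet_singleton _)]
    refine (lt_of_lt_of_le ?_ (measure_mono (μ := geometricMeasure p)
      (singleton_subset_iff.2 (mem_preimage.2 rfl) : {k} ⊆ e ⁻¹' {e k}))).ne'
    rw [geometricMeasure_singleton hp0]
    exact ENNReal.ofReal_pos.2 (geometricMeasure_pos hp0 hp1 k)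
  rw [← measure_cdf μ, StieltjesFunction.measure_singleton, Ne,
    ENNReal.ofReal_eq_zero, not_le, sub_pos] at hatom
  exact hatom

lemma exists_isTimeScale_leftLim_lt {T : ℝ} (hT : 0 < T) {D : Set ℝ} (hD : D.Countable) :
    ∃ G : ℝ → ℝ, IsTimeScale G T ∧ ∀ d ∈ D, Function.leftLim G d < G d := by
  obtain ⟨F, hF⟩ := exists_stieltjesFunction_leftLim_lt hD
  have hc : 0 < T + F T - F 0 := by linarith [F.mono hT.le]
  refine ⟨fun t => (t + F t - F 0) / (T + F T - F 0),
    ⟨fun a b hab => ?_, fun t => ?_, by simp, div_self hc.ne'⟩, fun d hd => ?_⟩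
  · exact div_lt_div_of_pos_right (by linarith [F.mono hab.le]) hc
  · exact ((continuousWithinAt_id.add (F.right_continuous t)).sub
      continuousWithinAt_const).div_const _
  · have hlim := (((tendsto_nhdsWithin_of_tendsto_nhds (tendsto_id (x := 𝓝 d))).add
      (F.mono.tendsto_leftLim d)).sub_const (F 0)).div_const (T + F T - F 0)
    rw [leftLim_eq_of_tendsto (by simpa using hlim)]
    exact div_lt_div_of_pos_right (by linarith [hF d hd]) hc

noncomputable def paramTime (G : ℝ → ℝ) (T s : ℝ) : ℝ := sInf {t ∈ Icc 0 T | s ≤ G t}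

section paramTime

variable {G : ℝ → ℝ} {T s : ℝ}

lemma paramTime_le {t : ℝ} (ht : t ∈ Icc 0 T) (h : s ≤ G t) : paramTime G T s ≤ t :=
  csInf_le ⟨0, fun _ h => h.1.1⟩ ⟨ht, h⟩

lemma paramTime_mem_Icc (hG : IsTimeScale G T) (hs : s ≤ 1) : paramTime G T s ∈ Icc 0 T :=
  ⟨le_csInf ⟨T, right_mem_Icc.2 hG.nonneg, hG.map_T ▸ hs⟩ fun _ h => h.1.1,
    paramTime_le (right_mem_Icc.2 hG.nonneg) (hG.map_T ▸ hs)⟩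

lemma le_apply_paramTime (hG : IsTimeScale G T) (hs : s ≤ 1) : s ≤ G (paramTime G T s) := by
  by_contra! h
  obtain ⟨c, hc, hsub⟩ :=
    mem_nhdsGE_iff_exists_Ico_subset.1 (hG.continuousWithinAt_Ici _ (Iio_mem_nhds h))
  have hne : ({t ∈ Icc 0 T | s ≤ G t} : Set ℝ).Nonempty :=
    ⟨T, right_mem_Icc.2 hG.nonneg, hG.map_T ▸ hs⟩
  obtain ⟨a, ha, hac⟩ := exists_lt_of_csInf_lt hne hc
  have : G a < s := hsub ⟨paramTime_le ha.1 ha.2, hac⟩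
  exact this.not_ge ha.2

lemma paramTime_le_iff (hG : IsTimeScale G T) (hs : s ≤ 1) {t : ℝ} (ht : t ∈ Icc 0 T) :
    paramTime G T s ≤ t ↔ s ≤ G t :=
  ⟨fun h => (le_apply_paramTime hG hs).trans (hG.strictMono.monotone h), paramTime_le ht⟩

lemma paramTime_eq_iff (hG : IsTimeScale G T) (hs : s ∈ Icc 0 1) {t : ℝ} (ht : t ∈ Icc 0 T) :
    paramTime G T s = t ↔ Function.leftLim G t ≤ s ∧ s ≤ G t := by
  have hmono := hG.strictMono.monotone
  constructor
  · rintro rfl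
    refine ⟨?_, le_apply_paramTime hG hs.2⟩
    rcases ht.1.eq_or_lt with h0 | h0
    · rw [← h0]
      exact (hmono.leftLim_le le_rfl).trans (by rw [hG.map_zero]; exact hs.1)
    refine le_of_tendsto (hmono.tendsto_leftLim _) ?_
    filter_upwards [Ioo_mem_nhdsLT h0] with w hw
    exact (not_le.1 fun h => hw.2.not_ge ((paramTime_le_iff hG hs.2
      ⟨hw.1.le, hw.2.le.trans ht.2⟩).2 h)).le
  · rintro ⟨hl, hr⟩
    refine le_antisymm (paramTime_le ht hr) (not_lt.1 fun h => ?_)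
    exact ((le_apply_paramTime hG hs.2).trans_lt (hG.strictMono.lt_leftLim h)).not_ge hl

lemma paramTime_zero (hG : IsTimeScale G T) : paramTime G T 0 = 0 :=
  (paramTime_eq_iff hG (left_mem_Icc.2 zero_le_one) (left_mem_Icc.2 hG.nonneg)).2
    ⟨(hG.strictMono.monotone.leftLim_le le_rfl).trans hG.map_zero.le, hG.map_zero.ge⟩

lemma paramTime_one (hG : IsTimeScale G T) : paramTime G T 1 = T :=
  (paramTime_eq_iff hG (right_mem_Icc.2 zero_le_one) (right_mem_Icc.2 hG.nonneg)).2
    ⟨(hG.strictMono.monotone.leftLim_le le_rfl).trans hG.map_T.le, hG.map_T.ge⟩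

lemma paramTime_monotoneOn (hG : IsTimeScale G T) : MonotoneOn (paramTime G T) (Icc 0 1) :=
  fun _ _ _ hs₂ h => (paramTime_le_iff hG (h.trans hs₂.2) (paramTime_mem_Icc hG hs₂.2)).2
    (h.trans (le_apply_paramTime hG hs₂.2))

lemma continuousOn_paramTime (hG : IsTimeScale G T) :
    ContinuousOn (paramTime G T) (Icc 0 1) := by
  intro s₀ hs₀
  have ht₀ := paramTime_mem_Icc hG hs₀.2
  obtain ⟨hl, hr⟩ := (paramTime_eq_iff hG hs₀ ht₀).1 rfl
  refine tendsto_order.2 ⟨fun b hb => ?_, fun b hb => ?_⟩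
  · have hb' : G ((b + paramTime G T s₀) / 2) < s₀ :=
      (hG.strictMono.lt_leftLim (add_div_two_lt_right.2 hb)).trans_le hl
    filter_upwards [self_mem_nhdsWithin, mem_nhdsWithin_of_mem_nhds (Ioi_mem_nhds hb')]
      with s hs hs'
    refine (left_lt_add_div_two.2 hb).trans (not_le.1 fun h => ?_)
    exact (hG.strictMono.monotone h).not_gt (hs'.trans_le (le_apply_paramTime hG hs.2))
  · rcases ht₀.2.eq_or_lt with hT₀ | hT₀
    · rw [hT₀] at hb
      filter_upwards [self_mem_nhdsWithin] with s hs
      exact (paramTime_mem_Icc hG hs.2).2.trans_lt hb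
    set t' := min ((paramTime G T s₀ + b) / 2) T
    have ht' : paramTime G T s₀ < t' := lt_min (left_lt_add_div_two.2 hb) hT₀
    filter_upwards
      [mem_nhdsWithin_of_mem_nhds (Iio_mem_nhds (hr.trans_lt (hG.strictMono ht')))] with s hs
    exact (paramTime_le ⟨ht₀.1.trans ht'.le, min_le_right _ _⟩ hs.le).trans_lt
      ((min_le_left _ _).trans_lt (add_div_two_lt_right.2 hb))

end paramTime

-- Where `G` is continuous at `t` the denominator vanishes and `fillJump x G t s = x t`.
noncomputable def fillJump (x G : ℝ → ℝ) (t s : ℝ) : ℝ :=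
  x t + (G t - s) / (G t - Function.leftLim G t) * (leftL x t - x t)

section fillJump

variable {x G : ℝ → ℝ} {t s : ℝ}

lemma fillJump_mem_segment (hl : Function.leftLim G t ≤ s) (hr : s ≤ G t) :
    fillJump x G t s ∈ segment ℝ (leftL x t) (x t) := by
  rw [segment_symm, segment_eq_image']
  exact ⟨(G t - s) / (G t - Function.leftLim G t), ⟨div_nonneg (by linarith) (by linarith),
    div_le_one_of_le₀ (by linarith) (by linarith)⟩, by simp [fillJump]⟩

lemma fillJump_self : fillJump x G t (G t) = x t := by simp [fillJump]

lemma fillJump_leftLim (h : Function.leftLim G t < G t) :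
    fillJump x G t (Function.leftLim G t) = leftL x t := by
  rw [fillJump, div_self (sub_ne_zero.2 h.ne')]
  ring

lemma continuous_fillJump : Continuous (fillJump x G t) := by
  unfold fillJump
  fun_prop

lemma sub_fillJump_mul_nonneg {s₁ s₂ : ℝ} (h : s₁ ≤ s₂) (hG : Function.leftLim G t ≤ G t) :
    0 ≤ (fillJump x G t s₂ - fillJump x G t s₁) * (x t - leftL x t) := by
  have : (fillJump x G t s₂ - fillJump x G t s₁) * (x t - leftL x t) =
      (s₂ - s₁) / (G t - Function.leftLim G t) * (x t - leftL x t) ^ 2 := by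
    unfold fillJump
    ring
  rw [this]
  exact mul_nonneg (div_nonneg (sub_nonneg.2 h) (sub_nonneg.2 hG)) (sq_nonneg _)

end fillJump

noncomputable def paramValue (x G : ℝ → ℝ) (T s : ℝ) : ℝ := fillJump x G (paramTime G T s) s

section paramValue

variable {x G : ℝ → ℝ} {T : ℝ}

lemma paramValue_mem_segment (hG : IsTimeScale G T) {s : ℝ} (hs : s ∈ Icc 0 1) :
    paramValue x G T s ∈ segment ℝ (leftL x (paramTime G T s)) (x (paramTime G T s)) :=
  have h := (paramTime_eq_iff hG hs (paramTime_mem_Icc hG hs.2)).1 rfl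
  fillJump_mem_segment h.1 h.2

lemma exists_paramValue_eq (hG : IsTimeScale G T)
    (hjump : ∀ t ∈ Ioc 0 T, x t ≠ leftL x t → Function.leftLim G t < G t) {t v : ℝ}
    (ht : t ∈ Icc 0 T) (hv : v ∈ segment ℝ (leftL x t) (x t)) :
    ∃ s ∈ Icc 0 1, paramTime G T s = t ∧ paramValue x G T s = v := by
  have hmono := hG.strictMono.monotone
  have hGt : G t ∈ Icc 0 1 :=
    ⟨hG.map_zero ▸ hmono ht.1, hG.map_T ▸ hmono ht.2⟩
  by_cases hxt : x t = leftL x t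
  · have hrt := (paramTime_eq_iff hG hGt ht).2 ⟨hmono.leftLim_le le_rfl, le_rfl⟩
    rw [← hxt, segment_same, mem_singleton_iff] at hv
    exact ⟨G t, hGt, hrt, by rw [paramValue, hrt, fillJump_self, hv]⟩
  have ht0 : 0 < t := ht.1.lt_of_ne (by rintro rfl; exact hxt (leftL_zero x).symm)
  have hgap := hjump t ⟨ht0, ht.2⟩ hxt
  rw [segment_symm, segment_eq_image'] at hv
  obtain ⟨θ, hθ, rfl⟩ := hv
  set s := G t - θ * (G t - Function.leftLim G t)
  have hl : Function.leftLim G t ≤ s := by nlinarith [hθ.2]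
  have hr : s ≤ G t := by nlinarith [hθ.1]
  have hs : s ∈ Icc 0 1 := ⟨(hG.map_zero ▸ hmono.le_leftLim ht0).trans hl, hr.trans hGt.2⟩
  have hrt := (paramTime_eq_iff hG hs ht).2 ⟨hl, hr⟩
  refine ⟨s, hs, hrt, ?_⟩
  simp only [paramValue, hrt, fillJump, smul_eq_mul, s]
  field_simp [(sub_pos.2 hgap).ne']
  ring

lemma continuousWithinAt_paramValue_Icc_right (hG : IsTimeScale G T) (hx : IsCadlagOn T x)
    {s₀ : ℝ} (hs₀ : s₀ ∈ Icc 0 1) : ContinuousWithinAt (paramValue x G T) (Icc s₀ 1) s₀ := by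
  set t₀ := paramTime G T s₀
  have ht₀ : t₀ ∈ Icc 0 T := paramTime_mem_Icc hG hs₀.2
  obtain ⟨hl, hr⟩ := (paramTime_eq_iff hG hs₀ ht₀).1 rfl
  have hsub : Icc s₀ 1 ⊆ Icc 0 1 := Icc_subset_Icc_left hs₀.1
  -- Right of `s₀`, either `paramTime` rests at `t₀` and `paramValue` is affine, or it moves
  -- strictly past `t₀` and both ends of the segment tend to `x t₀`.
  rcases hr.lt_or_eq with hlt | heq
  · refine continuous_fillJump.continuousWithinAt.congr_of_eventuallyEq ?_ rfl
    filter_upwards [self_mem_nhdsWithin, mem_nhdsWithin_of_mem_nhds (Iio_mem_nhds hlt)]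
      with s hs hs'
    rw [paramValue, (paramTime_eq_iff hG (hsub hs) ht₀).2 ⟨hl.trans hs.1, hs'.le⟩]
  have hval : paramValue x G T s₀ = x t₀ := by
    show fillJump x G t₀ s₀ = x t₀
    rw [heq, fillJump_self]
  have htime : Tendsto (paramTime G T) (𝓝[Ioc s₀ 1] s₀) (𝓝[Ioc t₀ T] t₀) := by
    refine tendsto_nhdsWithin_iff.2 ⟨(continuousOn_paramTime hG s₀ hs₀).tendsto.mono_left
      (nhdsWithin_mono _ (Ioc_subset_Icc_self.trans hsub)), ?_⟩
    filter_upwards [self_mem_nhdsWithin] with s hs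
    refine ⟨not_le.1 fun h => ?_, (paramTime_mem_Icc hG hs.2).2⟩
    exact hs.1.not_ge (heq ▸ (paramTime_le_iff hG hs.2 ht₀).1 h)
  rw [← continuousWithinAt_sdiff_self, Icc_sdiff_left, ContinuousWithinAt, hval]
  refine tendsto_of_mem_segment ((hx.tendsto_leftL_nhdsWithin_Ioc ht₀).comp htime)
    ((hx.tendsto_nhdsWithin_Ioc ht₀).comp htime) ?_
  filter_upwards [self_mem_nhdsWithin] with s hs
  exact paramValue_mem_segment hG (Ioc_subset_Icc_self.trans hsub hs)

lemma continuousWithinAt_paramValue_Icc_left (hG : IsTimeScale G T) (hx : IsCadlagOn T x)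
    (hjump : ∀ t ∈ Ioc 0 T, x t ≠ leftL x t → Function.leftLim G t < G t)
    {s₀ : ℝ} (hs₀ : s₀ ∈ Icc 0 1) : ContinuousWithinAt (paramValue x G T) (Icc 0 s₀) s₀ := by
  set t₀ := paramTime G T s₀
  have ht₀ : t₀ ∈ Icc 0 T := paramTime_mem_Icc hG hs₀.2
  obtain ⟨hl, hr⟩ := (paramTime_eq_iff hG hs₀ ht₀).1 rfl
  have hsub : Icc 0 s₀ ⊆ Icc 0 1 := Icc_subset_Icc_right hs₀.2
  rcases hl.lt_or_eq with hlt | heq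
  · refine continuous_fillJump.continuousWithinAt.congr_of_eventuallyEq ?_ rfl
    filter_upwards [self_mem_nhdsWithin, mem_nhdsWithin_of_mem_nhds (Ioi_mem_nhds hlt)]
      with s hs hs'
    rw [paramValue, (paramTime_eq_iff hG (hsub hs) ht₀).2 ⟨hs'.le, hs.2.trans hr⟩]
  rcases hs₀.1.eq_or_lt with h0 | h0
  · rw [← h0, Icc_self]
    exact continuousWithinAt_singleton
  have ht0 : 0 < t₀ := ht₀.1.lt_of_ne fun h => by
    rw [← h, hG.map_zero] at hr
    linarith
  have hval : paramValue x G T s₀ = leftL x t₀ := by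
    show fillJump x G t₀ s₀ = leftL x t₀
    by_cases hxt : x t₀ = leftL x t₀
    · rw [fillJump, ← hxt, sub_self, mul_zero, add_zero]
    · rw [← heq, fillJump_leftLim (hjump t₀ ⟨ht0, ht₀.2⟩ hxt)]
  have htime : Tendsto (paramTime G T) (𝓝[Ico 0 s₀] s₀) (𝓝[<] t₀) := by
    refine tendsto_nhdsWithin_iff.2 ⟨(continuousOn_paramTime hG s₀ hs₀).tendsto.mono_left
      (nhdsWithin_mono _ (Ico_subset_Icc_self.trans hsub)), ?_⟩
    filter_upwards [self_mem_nhdsWithin] with s hs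
    have hs' : s ∈ Icc 0 1 := Ico_subset_Icc_self.trans hsub hs
    refine not_le.1 fun (h : t₀ ≤ paramTime G T s) => hs.2.not_ge ?_
    calc s₀ = Function.leftLim G t₀ := heq.symm
      _ ≤ Function.leftLim G (paramTime G T s) := hG.strictMono.monotone.leftLim h
      _ ≤ s := ((paramTime_eq_iff hG hs' (paramTime_mem_Icc hG hs'.2)).1 rfl).1
  rw [← continuousWithinAt_sdiff_self, Icc_sdiff_right, ContinuousWithinAt, hval]
  refine tendsto_of_mem_segment ((hx.tendsto_leftL_nhdsLT ⟨ht0, ht₀.2⟩).comp htime)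
    ((hx.tendsto_nhdsLT ⟨ht0, ht₀.2⟩).comp htime) ?_
  filter_upwards [self_mem_nhdsWithin] with s hs
  exact paramValue_mem_segment hG (Ico_subset_Icc_self.trans hsub hs)

lemma continuousOn_paramValue (hG : IsTimeScale G T) (hx : IsCadlagOn T x)
    (hjump : ∀ t ∈ Ioc 0 T, x t ≠ leftL x t → Function.leftLim G t < G t) :
    ContinuousOn (paramValue x G T) (Icc 0 1) := by
  intro s₀ hs₀
  rw [← Icc_union_Icc_eq_Icc hs₀.1 hs₀.2]
  exact (continuousWithinAt_paramValue_Icc_left hG hx hjump hs₀).union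
    (continuousWithinAt_paramValue_Icc_right hG hx hs₀)

end paramValue

lemma IsCadlagOn.exists_isParamRep {T : ℝ} {x : ℝ → ℝ} (hx : IsCadlagOn T x) (hT : 0 < T) :
    ∃ u r, IsParamRep T x u r := by
  obtain ⟨G, hG, hD⟩ := exists_isTimeScale_leftLim_lt hT hx.countable_jumps
  have hjump : ∀ t ∈ Ioc 0 T, x t ≠ leftL x t → Function.leftLim G t < G t :=
    fun t ht h => hD t ⟨ht, h⟩
  refine ⟨paramValue x G T, paramTime G T, continuousOn_paramValue hG hx hjump,
    continuousOn_paramTime hG, paramTime_monotoneOn hG, paramTime_zero hG, paramTime_one hG,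
    fun s hs => paramValue_mem_segment hG hs,
    fun t ht v hv => exists_paramValue_eq hG hjump ht hv, fun s₁ _ s₂ _ h heq => ?_⟩
  rw [paramValue, paramValue, ← heq]
  exact sub_fillJump_mul_nonneg h (hG.strictMono.monotone.leftLim_le le_rfl)

lemma isParamRep_of_continuousOn {T : ℝ} (hT : 0 < T) {x : ℝ → ℝ}
    (hx : ContinuousOn x (Icc 0 T)) : IsParamRep T x (fun s => x (T * s)) (fun s => T * s) := by
  have hmaps : MapsTo (fun s => T * s) (Icc 0 1) (Icc 0 T) := fun s hs =>
    ⟨mul_nonneg hT.le hs.1, mul_le_of_le_one_right hT.le hs.2⟩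
  have hseg : ∀ t ∈ Icc 0 T, segment ℝ (leftL x t) (x t) = {x t} := fun t ht => by
    rw [leftL_eq_of_continuousOn hx ht, segment_same]
  refine ⟨hx.comp (by fun_prop) hmaps, by fun_prop, fun a _ b _ hab => by
    simpa using mul_le_mul_of_nonneg_left hab hT.le, by simp, by simp, fun s hs => ?_,
    fun t ht v hv => ?_, fun s₁ _ s₂ _ _ h => ?_⟩
  · simp [hseg _ (hmaps hs)]
  · rw [hseg t ht, mem_singleton_iff] at hv
    refine ⟨t / T, ⟨div_nonneg ht.1 hT.le, (div_le_one hT).2 ht.2⟩,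
      mul_div_cancel₀ t hT.ne', ?_⟩
    simp [mul_div_cancel₀ t hT.ne', hv]
  · simp [mul_left_cancel₀ hT.ne' h]

lemma IsParamRep.mem_Icc {T : ℝ} {x u r : ℝ → ℝ} (h : IsParamRep T x u r) {s : ℝ}
    (hs : s ∈ Icc 0 1) : r s ∈ Icc 0 T := by
  obtain ⟨-, -, hmono, h0, h1, -⟩ := h
  exact ⟨h0 ▸ hmono (left_mem_Icc.2 zero_le_one) hs hs.1,
    h1 ▸ hmono hs (right_mem_Icc.2 zero_le_one) hs.2⟩

lemma abs_le_unif {g : ℝ → ℝ} (hg : ContinuousOn g (Icc 0 1)) {s : ℝ} (hs : s ∈ Icc 0 1) :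
    |g s| ≤ unif g := by
  refine le_ciSup (f := fun s : Icc (0 : ℝ) 1 => |g s|) ?_ ⟨s, hs⟩
  exact (isCompact_Icc.image_of_continuousOn hg.abs).bddAbove.mono
    (by rintro _ ⟨s, rfl⟩; exact ⟨s, s.2, rfl⟩)

lemma exists_mem_segment_near_of_dM1_lt {T ε : ℝ} (hT : 0 < T) {y x : ℝ → ℝ}
    (hy : ContinuousOn y (Icc 0 T)) (hx : IsCadlagOn T x) (hε : dM1 T y x < ε) {t : ℝ}
    (ht : t ∈ Icc 0 T) :
    ∃ τ ∈ Icc 0 T, |τ - t| < ε ∧ ∃ v ∈ segment ℝ (leftL x τ) (x τ), |y t - v| < ε := by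
  obtain ⟨u, r, hrep⟩ := hx.exists_isParamRep hT
  rw [dM1] at hε
  have hne : Set.Nonempty {d : ℝ | ∃ u₁ r₁ u₂ r₂ : ℝ → ℝ, IsParamRep T y u₁ r₁ ∧
      IsParamRep T x u₂ r₂ ∧ d = max (unif fun s => u₁ s - u₂ s) (unif fun s => r₁ s - r₂ s)} :=
    ⟨_, _, _, _, _, isParamRep_of_continuousOn hT hy, hrep, rfl⟩
  obtain ⟨_, ⟨u₁, r₁, u₂, r₂, h₁, h₂, rfl⟩, hlt⟩ := exists_lt_of_csInf_lt hne hε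
  obtain ⟨hu₁, hr₁, -, hr₁0, hr₁1, hseg₁, -, -⟩ := h₁
  obtain ⟨s, hs, hst⟩ := intermediate_value_Icc zero_le_one hr₁ (hr₁0.symm ▸ hr₁1.symm ▸ ht)
  have hu₁s : u₁ s = y t := by
    simpa [hst, leftL_eq_of_continuousOn hy ht] using hseg₁ s hs
  have hτ := h₂.mem_Icc hs
  obtain ⟨hu₂, hr₂, -, -, -, hseg₂, -, -⟩ := h₂
  refine ⟨r₂ s, hτ, ?_, u₂ s, hseg₂ s hs, ?_⟩
  · rw [← hst, abs_sub_comm]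
    exact (abs_le_unif (hr₁.sub hr₂) hs).trans_lt ((le_max_right _ _).trans_lt hlt)
  · rw [← hu₁s]
    exact (abs_le_unif (hu₁.sub hu₂) hs).trans_lt ((le_max_left _ _).trans_lt hlt)

lemma eventually_supT_sub_le {T : ℝ} (hT : 0 < T) {x : ℕ → ℝ → ℝ} {x₀ : ℝ → ℝ}
    (hx₀ : IsCadlagOn T x₀) (hcont : ∀ n, ContinuousOn (x n) (Icc 0 T))
    (hconv : Tendsto (fun n => dM1 T (x n) x₀) atTop (𝓝 0)) {η : ℝ} (hη : 0 < η) :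
    ∀ᶠ n in atTop, supT T (fun t => x n t - x₀ t) ≤ Jmax T x₀ + η := by
  obtain ⟨δ, hδ, hosc⟩ := hx₀.exists_abs_sub_le_Jmax_add (half_pos hη)
  filter_upwards [hconv (Iio_mem_nhds (lt_min hδ (half_pos hη)))] with n hn
  have : Nonempty (Icc (0 : ℝ) T) := ⟨⟨0, left_mem_Icc.2 hT.le⟩⟩
  refine ciSup_le fun ⟨t, ht⟩ => ?_
  obtain ⟨τ, hτ, hτt, v, hv, hxv⟩ := exists_mem_segment_near_of_dM1_lt hT (hcont n) hx₀ hn ht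
  have hτt' : |τ - t| < δ := hτt.trans_le (min_le_left _ _)
  have hvt : v ∈ Metric.closedBall (x₀ t) (Jmax T x₀ + η / 2) := by
    refine (convex_closedBall _ _).segment_subset ?_ ?_ hv <;>
      rw [Metric.mem_closedBall, Real.dist_eq]
    · exact hx₀.abs_leftL_sub_le hosc hτ ht hτt'
    · exact hosc τ hτ t ht hτt'
  rw [Metric.mem_closedBall, Real.dist_eq] at hvt
  linarith [abs_sub_le (x n t) v (x₀ t), hxv.trans_le (min_le_right δ (η / 2))]

theorem limsup_uniform_distance_le_jmax_of_continuous_general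
    (T : ℝ) (hT : 0 < T)
    (x : ℕ → ℝ → ℝ) (x₀ : ℝ → ℝ)
    (hx₀c : IsCadlagOn T x₀)
    (hcont : ∀ n, ContinuousOn (x n) (Set.Icc (0:ℝ) T))
    (hconv : Filter.Tendsto (fun n => dM1 T (x n) x₀) Filter.atTop (nhds 0)) :
    Filter.limsup (fun n => supT T fun t => x n t - x₀ t) Filter.atTop ≤
      Jmax T x₀ := by
  have hcobdd : IsCoboundedUnder (· ≤ ·) atTop (fun n => supT T fun t => x n t - x₀ t) :=
    isCoboundedUnder_le_of_le atTop fun _ => Real.iSup_nonneg fun _ => abs_nonneg _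
  exact le_of_forall_pos_le_add fun η hη =>
    limsup_le_of_le hcobdd (eventually_supT_sub_le hT hx₀c hcont hconv hη)

/-- Lemma 4.2(c): if in addition each `xₙ` is continuous, then
`limsup ‖xₙ - x‖ ≤ J_max(x)`. -/
theorem limsup_uniform_distance_le_jmax_of_continuous
    (T : ℝ) (hT : 0 < T)
    (x : ℕ → ℝ → ℝ) (x₀ : ℝ → ℝ)
    (hxc : ∀ n, IsCadlagOn T (x n)) (hx₀c : IsCadlagOn T x₀)
    (hcont : ∀ n, ContinuousOn (x n) (Set.Icc (0:ℝ) T))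
    (hconv : Filter.Tendsto (fun n => dM1 T (x n) x₀) Filter.atTop (nhds 0)) :
    Filter.limsup (fun n => supT T fun t => x n t - x₀ t) Filter.atTop ≤
      Jmax T x₀ :=
  limsup_uniform_distance_le_jmax_of_continuous_general T hT x x₀ hx₀c hcont hconv
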